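/- For discrete random variables V1, U, V2, Y2, M1 on finite sets such that M1 is a deterministic function of V1 (the bin index of the codeword), the following identity/lower bound holds: H(M1 | Y2, U, V2) ≥ H(V1 | U) − I(V1; V2 | U) − H(V1 | M1, U, V2, Y2) − I(V1; Y2 | U, V2). -/

import Mathlib

open Finset Filter MeasureTheory ProbabilityTheory

noncomputable def probEq {Ω A : Type*} [Fintype Ω] [DecidableEq A]
    (p : Ω → ℝ) (f : Ω → A) (a : A) : ℝ :=
  ∑ ω, if f ω = a then p ω else 0

noncomputable def jointProb {Ω A B : Type*} [Fintype Ω] [DecidableEq A] [DecidableEq B]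
    (p : Ω → ℝ) (f : Ω → A) (g : Ω → B) (a : A) (b : B) : ℝ :=
  ∑ ω, if f ω = a ∧ g ω = b then p ω else 0

noncomputable def condEnt {Ω A B : Type*} [Fintype Ω] [Fintype A] [Fintype B]
    [DecidableEq A] [DecidableEq B] (p : Ω → ℝ) (f : Ω → A) (g : Ω → B) : ℝ :=
  -∑ a, ∑ b, jointProb p f g a b * Real.logb 2 (jointProb p f g a b / probEq p g b)

noncomputable def ent {Ω A : Type*} [Fintype Ω] [Fintype A] [DecidableEq A]
    (p : Ω → ℝ) (f : Ω → A) : ℝ :=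
  condEnt p f (fun _ => (() : Unit))

noncomputable def mi {Ω A B : Type*} [Fintype Ω] [Fintype A] [Fintype B]
    [DecidableEq A] [DecidableEq B] (p : Ω → ℝ) (f : Ω → A) (g : Ω → B) : ℝ :=
  ent p f - condEnt p f g

noncomputable def condMI {Ω A B C : Type*} [Fintype Ω] [Fintype A] [Fintype B] [Fintype C]
    [DecidableEq A] [DecidableEq B] [DecidableEq C]
    (p : Ω → ℝ) (f : Ω → A) (g : Ω → B) (h : Ω → C) : ℝ :=
  condEnt p f h - condEnt p f (fun ω => (g ω, h ω))

/-! Since M1 is a function of V1, with Z = (Y2, U, V2) the chain rule gives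
H(V1 | Z) = H(V1, M1 | Z) = H(M1 | Z) + H(V1 | M1, Z), and the two conditional mutual
informations telescope to H(V1 | U, V2) - H(V1 | Z); so the bound holds with equality.
Written as a sum over the sample space, a conditional entropy depends only on the level sets of
the two variables, and the chain rule becomes a pointwise identity of logarithms. -/

lemma jointProb_eq_probEq_prod {Ω A B : Type*} [Fintype Ω] [DecidableEq A] [DecidableEq B]
    (p : Ω → ℝ) (f : Ω → A) (g : Ω → B) (a : A) (b : B) :
    jointProb p f g a b = probEq p (fun ω => (f ω, g ω)) (a, b) := by
  simp only [jointProb, probEq, Prod.ext_iff]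

lemma condEnt_eq_sum {Ω A B : Type*} [Fintype Ω] [Fintype A] [Fintype B]
    [DecidableEq A] [DecidableEq B] (p : Ω → ℝ) (f : Ω → A) (g : Ω → B) :
    condEnt p f g = -∑ ω, p ω *
      Real.logb 2 (probEq p (fun ω => (f ω, g ω)) (f ω, g ω) / probEq p g (g ω)) := by
  set L : A → B → ℝ := fun a b => Real.logb 2 (jointProb p f g a b / probEq p g b)
  calc condEnt p f g = -∑ a, ∑ b, ∑ ω, if f ω = a ∧ g ω = b then p ω * L a b else 0 := by
        simp only [condEnt, jointProb, Finset.sum_mul, ite_mul, zero_mul, L]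
    _ = -∑ ω, ∑ a, ∑ b, if f ω = a ∧ g ω = b then p ω * L a b else 0 := by
        simp only [Finset.sum_comm (γ := Ω)]
    _ = _ := by
        simp only [jointProb_eq_probEq_prod, ite_and, Finset.sum_ite_irrel, Finset.sum_ite_eq,
          Finset.mem_univ, ↓reduceIte, Finset.sum_const_zero, L]

lemma probEq_congr {Ω A A' : Type*} [Fintype Ω] [DecidableEq A] [DecidableEq A']
    (p : Ω → ℝ) {f : Ω → A} {f' : Ω → A'} (h : ∀ ω ω', f ω = f ω' ↔ f' ω = f' ω') (ω : Ω) :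
    probEq p f (f ω) = probEq p f' (f' ω) :=
  Finset.sum_congr rfl fun ω' _ => by simp only [h ω' ω]

lemma le_probEq_of_nonneg {Ω A : Type*} [Fintype Ω] [DecidableEq A]
    {p : Ω → ℝ} (hp : ∀ ω, 0 ≤ p ω) (f : Ω → A) (ω : Ω) : p ω ≤ probEq p f (f ω) := by
  have := Finset.single_le_sum (f := fun ω' => if f ω' = f ω then p ω' else 0)
    (fun ω' _ => by split_ifs <;> simp [hp]) (Finset.mem_univ ω)
  simpa [probEq] using this

lemma condEnt_congr {Ω A A' B B' : Type*} [Fintype Ω] [Fintype A] [Fintype A'] [Fintype B]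
    [Fintype B'] [DecidableEq A] [DecidableEq A'] [DecidableEq B] [DecidableEq B']
    (p : Ω → ℝ) {f : Ω → A} {f' : Ω → A'} {g : Ω → B} {g' : Ω → B'}
    (hf : ∀ ω ω', f ω = f ω' ↔ f' ω = f' ω') (hg : ∀ ω ω', g ω = g ω' ↔ g' ω = g' ω') :
    condEnt p f g = condEnt p f' g' := by
  have hfg : ∀ ω ω', (f ω, g ω) = (f ω', g ω') ↔ (f' ω, g' ω) = (f' ω', g' ω') := by
    simp only [Prod.ext_iff, hf, hg, implies_true]
  simp only [condEnt_eq_sum, probEq_congr p hfg, probEq_congr p hg]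

lemma condEnt_prod_eq_add {Ω A B C : Type*} [Fintype Ω] [Fintype A] [Fintype B] [Fintype C]
    [DecidableEq A] [DecidableEq B] [DecidableEq C]
    {p : Ω → ℝ} (hp : ∀ ω, 0 ≤ p ω) (f : Ω → A) (g : Ω → B) (h : Ω → C) :
    condEnt p (fun ω => (f ω, g ω)) h
      = condEnt p g h + condEnt p f (fun ω => (g ω, h ω)) := by
  have hassoc : ∀ ω ω', ((f ω, g ω), h ω) = ((f ω', g ω'), h ω') ↔
      (f ω, g ω, h ω) = (f ω', g ω', h ω') := by
    simp only [Prod.ext_iff, and_assoc, implies_true]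
  simp only [condEnt_eq_sum, probEq_congr p hassoc, ← neg_add, ← Finset.sum_add_distrib]
  congr 1
  refine Finset.sum_congr rfl fun ω _ => ?_
  set a := probEq p (fun ω => (f ω, g ω, h ω)) (f ω, g ω, h ω)
  set b := probEq p (fun ω => (g ω, h ω)) (g ω, h ω)
  set c := probEq p h (h ω)
  rcases (hp ω).eq_or_lt with hzero | hpos
  · simp [← hzero]
  have ha : 0 < a := hpos.trans_le (le_probEq_of_nonneg hp _ ω)
  have hb : 0 < b := hpos.trans_le (le_probEq_of_nonneg hp _ ω)
  have hc : 0 < c := hpos.trans_le (le_probEq_of_nonneg hp _ ω)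
  rw [Real.logb_div ha.ne' hc.ne', Real.logb_div hb.ne' hc.ne', Real.logb_div ha.ne' hb.ne']
  ring

theorem equivocationDecomposition_general {Ω M V1 V2 U Y2 : Type*} [Fintype Ω] [Fintype M]
    [Fintype V1] [Fintype V2] [Fintype U] [Fintype Y2]
    [DecidableEq M] [DecidableEq V1] [DecidableEq V2] [DecidableEq U] [DecidableEq Y2]
    (p : Ω → ℝ) (hp : ∀ ω, 0 ≤ p ω)
    (M1f : Ω → M) (V1f : Ω → V1) (V2f : Ω → V2) (Uf : Ω → U) (Y2f : Ω → Y2)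
    (f : V1 → M) (hf : ∀ ω, M1f ω = f (V1f ω)) :
    condEnt p V1f Uf - condMI p V1f V2f Uf
      - condEnt p V1f (fun ω => (M1f ω, Uf ω, V2f ω, Y2f ω))
      - condMI p V1f Y2f (fun ω => (Uf ω, V2f ω))
    ≤ condEnt p M1f (fun ω => (Y2f ω, Uf ω, V2f ω)) := by
  have hchain := condEnt_prod_eq_add hp V1f M1f (fun ω => (Y2f ω, Uf ω, V2f ω))
  have hpair : condEnt p (fun ω => (V1f ω, M1f ω)) (fun ω => (Y2f ω, Uf ω, V2f ω))
      = condEnt p V1f (fun ω => (Y2f ω, Uf ω, V2f ω)) :=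
    condEnt_congr p (fun ω ω' => by
      simp only [Prod.ext_iff, hf]; exact and_iff_left_of_imp (congrArg f)) (fun _ _ => Iff.rfl)
  have hswap : condEnt p V1f (fun ω => (V2f ω, Uf ω))
      = condEnt p V1f (fun ω => (Uf ω, V2f ω)) :=
    condEnt_congr p (fun _ _ => Iff.rfl) (fun _ _ => by simp only [Prod.ext_iff]; tauto)
  have hreorder : condEnt p V1f (fun ω => (M1f ω, Y2f ω, Uf ω, V2f ω))
      = condEnt p V1f (fun ω => (M1f ω, Uf ω, V2f ω, Y2f ω)) :=
    condEnt_congr p (fun _ _ => Iff.rfl) (fun _ _ => by simp only [Prod.ext_iff]; tauto)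
  simp only [condMI]
  linarith

/-- Equivocation decomposition: if M1 = f(V1), then
H(M1 | Y2, U, V2) >= H(V1 | U) - I(V1;V2|U) - H(V1 | M1, U, V2, Y2) - I(V1;Y2|U,V2). -/
theorem equivocationDecomposition {Ω M V1 V2 U Y2 : Type*} [Fintype Ω] [Fintype M]
    [Fintype V1] [Fintype V2] [Fintype U] [Fintype Y2]
    [DecidableEq M] [DecidableEq V1] [DecidableEq V2] [DecidableEq U] [DecidableEq Y2]
    (p : Ω → ℝ) (hp : ∀ ω, 0 ≤ p ω) (hsum : ∑ ω, p ω = 1)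
    (M1f : Ω → M) (V1f : Ω → V1) (V2f : Ω → V2) (Uf : Ω → U) (Y2f : Ω → Y2)
    (f : V1 → M) (hf : ∀ ω, M1f ω = f (V1f ω)) :
    condEnt p V1f Uf - condMI p V1f V2f Uf
      - condEnt p V1f (fun ω => (M1f ω, Uf ω, V2f ω, Y2f ω))
      - condMI p V1f Y2f (fun ω => (Uf ω, V2f ω))
    ≤ condEnt p M1f (fun ω => (Y2f ω, Uf ω, V2f ω)) :=
  equivocationDecomposition_general p hp M1f V1f V2f Uf Y2f f hf
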